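/- arXiv:2412.13365 — 2 statements merged into one kernel-verified Lean document; each statement's English description precedes it below -/
import Mathlib

section
/- Monotonicity of the robustness lower bound under flowpipe refinement for the negation-free fragment: let ω and ω' be flowpipes such that at every time t the confidence interval of ω' is contained in that of ω. Then for every formula φ in the fragment {atomic, conjunction, always, eventually}, the lower bound of the robustness interval satisfies ρ̲(φ, ω, t) ≤ ρ̲(φ, ω', t), and the upper bound satisfies ρ̄(φ, ω', t) ≤ ρ̄(φ, ω, t). -/
/-- STL-U formulas over the fragment {atomic, negation, conjunction, always, eventually},
with finite nonempty time windows given as finite sets of time offsets. -/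
inductive STLU where
  | atom : (ℝ → ℝ) → STLU
  | not : STLU → STLU
  | and : STLU → STLU → STLU
  | always : (I : Finset ℕ) → I.Nonempty → STLU → STLU
  | eventually : (I : Finset ℕ) → I.Nonempty → STLU → STLU

/-- A flowpipe assigns to each time a confidence interval, given by its pair of endpoints. -/
def Flowpipe := ℕ → ℝ × ℝ

/-- A flowpipe is valid if every confidence interval is nonempty (lower ≤ upper). -/
def Flowpipe.Valid (ω : Flowpipe) : Prop := ∀ t, (ω t).1 ≤ (ω t).2

/-- Strong and weak satisfaction of an STL-U formula by a flowpipe at a time,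
returned as a pair (strong, weak). -/
def sat (ω : Flowpipe) : STLU → ℕ → Prop × Prop
  | .atom f, t =>
      (∀ x ∈ Set.Icc (ω t).1 (ω t).2, f x > 0, ∃ x ∈ Set.Icc (ω t).1 (ω t).2, f x > 0)
  | .not φ, t => (¬ (sat ω φ t).2, ¬ (sat ω φ t).1)
  | .and φ ψ, t => ((sat ω φ t).1 ∧ (sat ω ψ t).1, (sat ω φ t).2 ∧ (sat ω ψ t).2)
  | .always I _ φ, t => (∀ d ∈ I, (sat ω φ (t + d)).1, ∀ d ∈ I, (sat ω φ (t + d)).2)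
  | .eventually I _ φ, t => (∃ d ∈ I, (sat ω φ (t + d)).1, ∃ d ∈ I, (sat ω φ (t + d)).2)

/-- The STL-U quantitative semantics: the robustness degree interval,
returned as its pair of endpoints (lower, upper). -/
noncomputable def rob (ω : Flowpipe) : STLU → ℕ → ℝ × ℝ
  | .atom f, t =>
      (sInf (f '' Set.Icc (ω t).1 (ω t).2), sSup (f '' Set.Icc (ω t).1 (ω t).2))
  | .not φ, t => (-(rob ω φ t).2, -(rob ω φ t).1)
  | .and φ ψ, t =>
      (min (rob ω φ t).1 (rob ω ψ t).1, min (rob ω φ t).2 (rob ω ψ t).2)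
  | .always I h φ, t =>
      (I.inf' h fun d => (rob ω φ (t + d)).1, I.inf' h fun d => (rob ω φ (t + d)).2)
  | .eventually I h φ, t =>
      (I.sup' h fun d => (rob ω φ (t + d)).1, I.sup' h fun d => (rob ω φ (t + d)).2)

/-- All atomic functions occurring in the formula are continuous. -/
def atomsContinuous : STLU → Prop
  | .atom f => Continuous f
  | .not φ => atomsContinuous φ
  | .and φ ψ => atomsContinuous φ ∧ atomsContinuous ψ
  | .always _ _ φ => atomsContinuous φ
  | .eventually _ _ φ => atomsContinuous φ

/-- The formula contains no negation. -/
def negFree : STLU → Prop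
  | .atom _ => True
  | .not _ => False
  | .and φ ψ => negFree φ ∧ negFree ψ
  | .always _ _ φ => negFree φ
  | .eventually _ _ φ => negFree φ

/-! Shrinking the interval of a flowpipe shrinks the image of every atom, so the infimum of the
image can only rise and its supremum only fall. Conjunction, always and eventually act on each
endpoint by `min`, finite `inf'` and finite `sup'`, all monotone; only negation would swap the
endpoints, and it is excluded. -/

theorem IsCompact.csInf_image_le_and_csSup_image_le_of_subset {α β : Type*} [TopologicalSpace α]
    [ConditionallyCompleteLinearOrder β] [TopologicalSpace β] [OrderTopology β]
    {f : α → β} {s t : Set α} (hs : IsCompact s) (hf : ContinuousOn f s)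
    (ht : t.Nonempty) (hts : t ⊆ s) :
    sInf (f '' s) ≤ sInf (f '' t) ∧ sSup (f '' t) ≤ sSup (f '' s) :=
  have hfs : IsCompact (f '' s) := hs.image_of_continuousOn hf
  ⟨csInf_le_csInf hfs.bddBelow (ht.image f) (Set.image_mono hts),
    csSup_le_csSup hfs.bddAbove (ht.image f) (Set.image_mono hts)⟩

theorem robustness_monotone_refinement_general (φ : STLU) (hφn : negFree φ)
    (hφc : atomsContinuous φ) (ω ω' : Flowpipe)
    (hω' : ω'.Valid)
    (hsub : ∀ t, Set.Icc (ω' t).1 (ω' t).2 ⊆ Set.Icc (ω t).1 (ω t).2)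
    (t : ℕ) :
    (rob ω φ t).1 ≤ (rob ω' φ t).1 ∧ (rob ω' φ t).2 ≤ (rob ω φ t).2 := by
  induction φ generalizing t with
  | atom f =>
    exact isCompact_Icc.csInf_image_le_and_csSup_image_le_of_subset
      (hφc : Continuous f).continuousOn (Set.nonempty_Icc.2 (hω' t)) (hsub t)
  | not => exact hφn.elim
  | and φ ψ ihφ ihψ =>
    obtain ⟨hlφ, huφ⟩ := ihφ hφn.1 hφc.1 t
    obtain ⟨hlψ, huψ⟩ := ihψ hφn.2 hφc.2 t
    exact ⟨min_le_min hlφ hlψ, min_le_min huφ huψ⟩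
  | always I hI φ ih =>
    exact ⟨Finset.inf'_mono_fun (hs := hI) fun d _ => (ih hφn hφc (t + d)).1,
      Finset.inf'_mono_fun (hs := hI) fun d _ => (ih hφn hφc (t + d)).2⟩
  | eventually I hI φ ih =>
    exact ⟨Finset.sup'_mono_fun (hs := hI) fun d _ => (ih hφn hφc (t + d)).1,
      Finset.sup'_mono_fun (hs := hI) fun d _ => (ih hφn hφc (t + d)).2⟩

theorem robustness_monotone_refinement (φ : STLU) (hφn : negFree φ)
    (hφc : atomsContinuous φ) (ω ω' : Flowpipe)
    (hω : ω.Valid) (hω' : ω'.Valid)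
    (hsub : ∀ t, Set.Icc (ω' t).1 (ω' t).2 ⊆ Set.Icc (ω t).1 (ω t).2)
    (t : ℕ) :
    (rob ω φ t).1 ≤ (rob ω' φ t).1 ∧ (rob ω' φ t).2 ≤ (rob ω φ t).2 :=
  robustness_monotone_refinement_general φ hφn hφc ω ω' hω' hsub t
end

section
/- The robustness interval of a point flowpipe coincides with classical STL robustness: if at every time the flowpipe confidence interval degenerates to a single point [x_t, x_t], then for every formula in the fragment {atomic, negation, conjunction, always, eventually}, the STL-U robustness interval has equal lower and upper bounds, both equal to the classical STL robustness degree of the trace (x_t) for that formula. -/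
/-- Classical STL robustness degree of a (single) trace. -/
noncomputable def stlRob (x : ℕ → ℝ) : STLU → ℕ → ℝ
  | .atom f, t => f (x t)
  | .not φ, t => -(stlRob x φ t)
  | .and φ ψ, t => min (stlRob x φ t) (stlRob x ψ t)
  | .always I h φ, t => I.inf' h fun d => stlRob x φ (t + d)
  | .eventually I h φ, t => I.sup' h fun d => stlRob x φ (t + d)

theorem point_flowpipe_robustness_eq_stl (φ : STLU) (x : ℕ → ℝ) (t : ℕ) :
    rob (fun t' => (x t', x t')) φ t = (stlRob x φ t, stlRob x φ t) := by
  induction φ generalizing t with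
  | atom f =>
    simp [rob, stlRob, Set.Icc_self, Set.image_singleton]
  | not φ ih =>
    simp [rob, stlRob, ih]
  | and φ ψ ihφ ihψ =>
    simp [rob, stlRob, ihφ, ihψ]
  | always I h φ ih =>
    simp only [rob, stlRob]
    congr 1 <;> exact Finset.inf'_congr h rfl (fun d _ => by rw [ih])
  | eventually I h φ ih =>
    simp only [rob, stlRob]
    congr 1 <;> exact Finset.sup'_congr h rfl (fun d _ => by rw [ih])
end
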